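/- arXiv:math/0204125 — 16 statements merged into one kernel-verified Lean document; each statement's English description precedes it below -/
import Mathlib

section
/- Let f : X → Y be a function between topological spaces such that the image of every compact subset of X is compact and the image of every connected subset of X is connected. If f is continuous, then f is preserving; conversely, if X = ℝ and Y = ℝ, any such preserving function is continuous. -/
/-!
Let `g` be preserving but discontinuous at `a`. Compactness of `g '' ({a} ∪ {xₙ})` for a sequence
`xₙ → a` witnessing the discontinuity gives `g (xₙ) → y ≠ g a` along a subsequence. Connectedness of
the images of the intervals `[xₙ, a]` shows that every value strictly between `y` and `g a` is
attained arbitrarily close to `a`, so there are `tₖ → a` with `g (tₖ) → y` and `g (tₖ) ≠ y`. Then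
`y` is a limit point of the compact, hence closed, set `g '' ({a} ∪ {tₖ})` but does not belong to
it.
-/

open Filter Topology

/-- A function is *preserving* if it maps compact sets to compact sets and
connected sets to connected sets. -/
def Preserving {X Y : Type*} [TopologicalSpace X] [TopologicalSpace Y] (f : X → Y) : Prop :=
  (∀ K : Set X, IsCompact K → IsCompact (f '' K)) ∧
  (∀ C : Set X, IsPreconnected C → IsPreconnected (f '' C))

open Set

section Topological

variable {X Y : Type*} [TopologicalSpace X] [TopologicalSpace Y] {f : X → Y}

theorem Continuous.preserving (hf : Continuous f) : Preserving f :=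
  ⟨fun _ hK => hK.image hf, fun _ hC => hC.image f hf.continuousOn⟩

theorem apply_eq_of_tendsto_of_forall_ne [T2Space Y]
    (hf : ∀ K : Set X, IsCompact K → IsCompact (f '' K)) {x : ℕ → X} {a : X} {y : Y}
    (hx : Tendsto x atTop (𝓝 a)) (hfx : Tendsto (f ∘ x) atTop (𝓝 y)) (hne : ∀ n, f (x n) ≠ y) :
    f a = y := by
  have hy : y ∈ f '' insert a (range x) :=
    (hf _ hx.isCompact_insert_range).isClosed.mem_of_tendsto hfx
      (Eventually.of_forall fun n => mem_image_of_mem f (mem_insert_of_mem a (mem_range_self n)))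
  obtain ⟨_, rfl | ⟨n, rfl⟩, hy⟩ := hy
  · exact hy
  · exact absurd hy (hne n)

theorem exists_seq_tendsto_ne_of_not_continuousAt [FirstCountableTopology X]
    [FirstCountableTopology Y] (hf : ∀ K : Set X, IsCompact K → IsCompact (f '' K)) {a : X}
    (hfa : ¬ContinuousAt f a) :
    ∃ (x : ℕ → X) (y : Y), Tendsto x atTop (𝓝 a) ∧ Tendsto (f ∘ x) atTop (𝓝 y) ∧ y ≠ f a := by
  obtain ⟨U, hU, hfU⟩ := not_tendsto_iff_exists_frequently_notMem.1 hfa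
  obtain ⟨x, hx, hxU⟩ := exists_seq_forall_of_frequently hfU
  obtain ⟨y, -, φ, hφ, hy⟩ := (hf _ hx.isCompact_insert_range).tendsto_subseq
    fun n => mem_image_of_mem f (mem_insert_of_mem a (mem_range_self n))
  refine ⟨x ∘ φ, y, hx.comp hφ.tendsto_atTop, hy, ?_⟩
  rintro rfl
  obtain ⟨n, hn⟩ := (hy.eventually hU).exists
  exact hxU (φ n) hn

end Topological

section Order

variable {X Y : Type*} [TopologicalSpace X] [TopologicalSpace Y]

theorem eventually_mem_uIcc_of_mem_uIoo [LinearOrder Y] [OrderClosedTopology Y] {y b c : Y}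
    (hc : c ∈ uIoo y b) : ∀ᶠ z in 𝓝 y, c ∈ uIcc z b := by
  rcases le_total y b with hyb | hby
  · rw [uIoo_of_le hyb] at hc
    filter_upwards [Iio_mem_nhds hc.1] with z hz
    exact mem_uIcc_of_le (le_of_lt hz) hc.2.le
  · rw [uIoo_of_ge hby] at hc
    filter_upwards [Ioi_mem_nhds hc.2] with z hz
    exact mem_uIcc_of_ge hc.1.le (le_of_lt hz)

theorem frequently_apply_eq_of_tendsto [ConditionallyCompleteLinearOrder X] [OrderTopology X]
    [DenselyOrdered X] [LinearOrder Y] [OrderTopology Y] {g : X → Y}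
    (hg : ∀ C : Set X, IsPreconnected C → IsPreconnected (g '' C)) {x : ℕ → X} {a : X} {y c : Y}
    (hx : Tendsto x atTop (𝓝 a)) (hgx : Tendsto (g ∘ x) atTop (𝓝 y)) (hc : c ∈ uIoo y (g a)) :
    ∃ᶠ t in 𝓝 a, g t = c := by
  refine frequently_iff.2 fun {s} hs => ?_
  -- `ordConnectedComponent s a` is a neighbourhood of `a` containing `[[a, xₙ]]` once `xₙ` is in it
  obtain ⟨n, hxn, hgxn⟩ := ((hx.eventually (ordConnectedComponent_mem_nhds.2 hs)).and
    (hgx.eventually (eventually_mem_uIcc_of_mem_uIoo hc))).exists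
  obtain ⟨t, ht, rfl⟩ := (hg _ isPreconnected_uIcc).ordConnected.uIcc_subset
    (mem_image_of_mem g left_mem_uIcc) (mem_image_of_mem g right_mem_uIcc) hgxn
  exact ⟨t, mem_ordConnectedComponent.1 hxn (uIcc_comm (x n) a ▸ ht), rfl⟩

theorem Preserving.continuous [ConditionallyCompleteLinearOrder X] [OrderTopology X]
    [DenselyOrdered X] [FirstCountableTopology X] [LinearOrder Y] [OrderTopology Y]
    [DenselyOrdered Y] [FirstCountableTopology Y] {g : X → Y} (hg : Preserving g) :
    Continuous g := by
  refine continuous_iff_continuousAt.2 fun a => by_contra fun hga => ?_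
  obtain ⟨x, y, hxa, hgx, hya⟩ := exists_seq_tendsto_ne_of_not_continuousAt hg.1 hga
  have hy : y ∈ closure (uIoo y (g a)) := (closure_uIoo hya).symm ▸ left_mem_uIcc
  obtain ⟨c, hc, hcy⟩ := mem_closure_iff_seq_limit.1 hy
  obtain ⟨s, hs⟩ := (𝓝 a).exists_antitone_basis
  choose t htc hts using fun n =>
    ((frequently_apply_eq_of_tendsto hg.2 hxa hgx (hc n)).and_eventually (hs.mem n)).exists
  refine hya (apply_eq_of_tendsto_of_forall_ne hg.1 (hs.tendsto hts) ?_ fun n h => ?_).symm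
  · simpa only [Function.comp_def, htc] using hcy
  · exact left_notMem_uIoo (htc n ▸ h ▸ hc n)

end Order

theorem stmt0 {X Y : Type*} [TopologicalSpace X] [TopologicalSpace Y] :
    (∀ f : X → Y, Continuous f → Preserving f) ∧
    (∀ g : ℝ → ℝ, Preserving g → Continuous g) :=
  ⟨fun _ hf => hf.preserving, fun _ hg => hg.continuous⟩
end

section
/- If a Tychonoff (completely regular Hausdorff) space X is not locally connected at a point p, then there exists a preserving function f : X → [0,1] (preserving compactness and connectedness) which is not continuous at p. -/
/-!
Separate `p` from the complement of `U` by a continuous `g : X → [0,1]` with `g p = 0`, and let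
`C` be the component of `p` in `{g < 1/2} ⊆ U`. Put `f = plateauRamp ∘ g` off `C` and
`f = peakedRamp ∘ g` on `C`: the plateau ramp is `1/2` up to `1/4` and reaches `1` at `1/2`, the
peaked one lies above it, differs from it only below `1/4` and equals `1` at `0`. Since `C` is not
a neighbourhood of `p`, `f` jumps from `1` to `1/2` at `p`. On the other hand the two pieces
disagree only on the open set `{g < 1/4}`, where `plateauRamp ∘ g` is constant, and `C` is closed
in `{g < 1/2}`; this makes `f` preserve compactness. A connected set meeting both `C` and its
complement must leave `{g < 1/2}`, where `f = 1`, and this forces its image to be an interval.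
-/

open Filter Topology

open Set

section General

variable {X Y Z : Type*} [TopologicalSpace X] [TopologicalSpace Y] [TopologicalSpace Z]

theorem Topology.IsEmbedding.preserving_comp_iff {e : Y → Z} (he : IsEmbedding e) {f : X → Y} :
    Preserving (e ∘ f) ↔ Preserving f := by
  simp only [Preserving, image_comp, ← he.isCompact_iff, he.isInducing.isPreconnected_image]

theorem IsCompact.image_piecewise {C K : Set X} [DecidablePred (· ∈ C)] {φ ψ : X → Y}
    (hK : IsCompact K) (hφ : Continuous φ) (hψ : Continuous ψ)
    (h_closure : ∀ z ∈ closure C \ C, φ z = ψ z)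
    (h_inside : ∀ z ∈ C, φ z = ψ z ∨ ∀ᶠ y in 𝓝 z, ψ y = ψ z) :
    IsCompact (C.piecewise φ ψ '' K) := by
  suffices C.piecewise φ ψ '' K = φ '' (K ∩ closure C) ∪ ψ '' (K ∩ closure (K \ C)) by
    rw [this]
    exact ((hK.inter_right isClosed_closure).image hφ).union
      ((hK.inter_right isClosed_closure).image hψ)
  apply Subset.antisymm
  · rintro _ ⟨x, hxK, rfl⟩
    by_cases hx : x ∈ C
    · exact Or.inl ⟨x, ⟨hxK, subset_closure hx⟩, (piecewise_eq_of_mem _ _ _ hx).symm⟩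
    · exact Or.inr ⟨x, ⟨hxK, subset_closure ⟨hxK, hx⟩⟩, (piecewise_eq_of_notMem _ _ _ hx).symm⟩
  · rintro _ (⟨z, ⟨hzK, hzC⟩, rfl⟩ | ⟨z, ⟨hzK, hzC⟩, rfl⟩)
    · by_cases hz : z ∈ C
      · exact ⟨z, hzK, piecewise_eq_of_mem _ _ _ hz⟩
      · exact ⟨z, hzK, by rw [piecewise_eq_of_notMem _ _ _ hz, h_closure z ⟨hzC, hz⟩]⟩
    · by_cases hz : z ∈ C
      · rcases h_inside z hz with heq | hconst
        · exact ⟨z, hzK, by rw [piecewise_eq_of_mem _ _ _ hz, heq]⟩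
        · obtain ⟨y, hy, hyK, hyC⟩ := mem_closure_iff_nhds.mp hzC _ hconst
          exact ⟨y, hyK, by rw [piecewise_eq_of_notMem _ _ _ hyC, hy]⟩
      · exact ⟨z, hzK, piecewise_eq_of_notMem _ _ _ hz⟩

theorem IsPreconnected.image_of_continuousOn_minorant {α : Type*}
    [ConditionallyCompleteLinearOrder α] [TopologicalSpace α] [OrderTopology α] [DenselyOrdered α]
    {S : Set X} (hS : IsPreconnected S) {f ψ : X → α} (hψ : ContinuousOn ψ S)
    (hle : ∀ x ∈ S, ψ x ≤ f x) {z : X} (hz : z ∈ S) (hmax : ∀ x ∈ S, f x ≤ ψ z)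
    (heq : ∀ x ∈ S, ∀ y ∈ S, ψ y < ψ x → f x = ψ x) :
    IsPreconnected (f '' S) := by
  rw [isPreconnected_iff_ordConnected]
  refine ⟨?_⟩
  rintro _ ⟨x, hxS, rfl⟩ _ ⟨y, hyS, rfl⟩ s ⟨hxs, hsy⟩
  rcases hxs.eq_or_lt with rfl | hxs
  · exact ⟨x, hxS, rfl⟩
  obtain ⟨w, hwS, rfl⟩ :=
    hS.intermediate_value hxS hz hψ ⟨(hle x hxS).trans hxs.le, hsy.trans (hmax y hyS)⟩
  exact ⟨w, hwS, heq w hwS x hxS ((hle x hxS).trans_lt hxs)⟩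

theorem closure_connectedComponentIn_inter_subset (V : Set X) (p : X) :
    closure (connectedComponentIn V p) ∩ V ⊆ connectedComponentIn V p := by
  rintro z ⟨hzC, hzV⟩
  obtain ⟨w, hw⟩ := closure_nonempty_iff.mp ⟨z, hzC⟩
  have hconn : IsPreconnected (insert z (connectedComponentIn V p)) :=
    isPreconnected_connectedComponentIn.subset_closure (subset_insert _ _)
      (insert_subset hzC subset_closure)
  rw [connectedComponentIn_eq hw]
  exact hconn.subset_connectedComponentIn (mem_insert_of_mem _ hw)
    (insert_subset hzV (connectedComponentIn_subset _ _)) (mem_insert _ _)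

end General

noncomputable def plateauRamp (r : ℝ) : ℝ := max (1 / 2) (min (2 * r) 1)

noncomputable def peakedRamp (r : ℝ) : ℝ := max (1 - 2 * r) (plateauRamp r)

theorem half_le_plateauRamp (r : ℝ) : 1 / 2 ≤ plateauRamp r := le_max_left _ _

theorem plateauRamp_le_one (r : ℝ) : plateauRamp r ≤ 1 :=
  max_le (by norm_num) (min_le_right _ _)

theorem plateauRamp_of_le {r : ℝ} (hr : r ≤ 1 / 4) : plateauRamp r = 1 / 2 := by
  rw [plateauRamp, min_eq_left (by linarith), max_eq_left (by linarith)]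

theorem plateauRamp_of_ge {r : ℝ} (hr : 1 / 2 ≤ r) : plateauRamp r = 1 := by
  rw [plateauRamp, min_eq_right (by linarith), max_eq_right (by norm_num)]

theorem plateauRamp_le_peakedRamp (r : ℝ) : plateauRamp r ≤ peakedRamp r := le_max_right _ _

theorem peakedRamp_of_ge {r : ℝ} (hr : 1 / 4 ≤ r) : peakedRamp r = plateauRamp r :=
  max_eq_right ((by linarith : 1 - 2 * r ≤ 1 / 2).trans (half_le_plateauRamp r))

theorem peakedRamp_zero : peakedRamp 0 = 1 := by
  rw [peakedRamp, plateauRamp_of_le (by norm_num)]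
  norm_num

theorem peakedRamp_le_one {r : ℝ} (hr : 0 ≤ r) : peakedRamp r ≤ 1 :=
  max_le (by linarith) (plateauRamp_le_one r)

theorem continuous_plateauRamp : Continuous plateauRamp := by
  unfold plateauRamp; fun_prop

theorem continuous_peakedRamp : Continuous peakedRamp :=
  (continuous_const.sub (continuous_const.mul continuous_id)).max continuous_plateauRamp

section ComponentJump

variable {X : Type*} [TopologicalSpace X] {g : X → ℝ} {p x : X}

open scoped Classical in
noncomputable def componentJump (g : X → ℝ) (p : X) : X → ℝ :=
  (connectedComponentIn {x | g x < 1 / 2} p).piecewise (peakedRamp ∘ g) (plateauRamp ∘ g)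

theorem componentJump_of_mem (hx : x ∈ connectedComponentIn {x | g x < 1 / 2} p) :
    componentJump g p x = peakedRamp (g x) :=
  if_pos hx

theorem componentJump_of_notMem (hx : x ∉ connectedComponentIn {x | g x < 1 / 2} p) :
    componentJump g p x = plateauRamp (g x) :=
  if_neg hx

theorem componentJump_of_ge (hx : 1 / 4 ≤ g x) : componentJump g p x = plateauRamp (g x) := by
  by_cases hxC : x ∈ connectedComponentIn {x | g x < 1 / 2} p
  · rw [componentJump_of_mem hxC, peakedRamp_of_ge hx]
  · exact componentJump_of_notMem hxC

theorem plateauRamp_le_componentJump : plateauRamp (g x) ≤ componentJump g p x := by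
  by_cases hxC : x ∈ connectedComponentIn {x | g x < 1 / 2} p
  · rw [componentJump_of_mem hxC]
    exact plateauRamp_le_peakedRamp _
  · rw [componentJump_of_notMem hxC]

theorem componentJump_mem_Icc (hg₀ : ∀ x, 0 ≤ g x) (x : X) : componentJump g p x ∈ Icc 0 1 := by
  refine ⟨le_trans (by norm_num) ((half_le_plateauRamp _).trans plateauRamp_le_componentJump), ?_⟩
  by_cases hxC : x ∈ connectedComponentIn {x | g x < 1 / 2} p
  · rw [componentJump_of_mem hxC]
    exact peakedRamp_le_one (hg₀ x)
  · rw [componentJump_of_notMem hxC]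
    exact plateauRamp_le_one _

open scoped Classical in
theorem isCompact_image_componentJump (hg : Continuous g) {K : Set X} (hK : IsCompact K) :
    IsCompact (componentJump g p '' K) := by
  refine hK.image_piecewise (continuous_peakedRamp.comp hg) (continuous_plateauRamp.comp hg)
    (fun z ⟨hzC, hz⟩ ↦ peakedRamp_of_ge ?_) (fun z _ ↦ ?_)
  · by_contra! hlt
    exact hz (closure_connectedComponentIn_inter_subset _ _ ⟨hzC, show g z < 1 / 2 by linarith⟩)
  · rcases le_or_gt (1 / 4) (g z) with hge | hlt
    · exact Or.inl (peakedRamp_of_ge hge)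
    · refine Or.inr ?_
      filter_upwards [(isOpen_lt hg continuous_const).mem_nhds hlt] with y hy
      simp only [Function.comp_apply, plateauRamp_of_le hy.le, plateauRamp_of_le hlt.le]

theorem isPreconnected_image_componentJump (hg : Continuous g) (hg₀ : ∀ x, 0 ≤ g x)
    {S : Set X} (hS : IsPreconnected S) : IsPreconnected (componentJump g p '' S) := by
  set C := connectedComponentIn {x | g x < 1 / 2} p
  by_cases hSC : S ⊆ C
  · rw [image_congr fun x hx ↦ componentJump_of_mem (hSC hx)]
    exact hS.image _ (continuous_peakedRamp.comp hg).continuousOn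
  by_cases hSC' : Disjoint S C
  · rw [image_congr fun x hx ↦ componentJump_of_notMem (hSC'.notMem_of_mem_left hx)]
    exact hS.image _ (continuous_plateauRamp.comp hg).continuousOn
  obtain ⟨x₀, hx₀S, hx₀C⟩ := not_disjoint_iff.mp hSC'
  -- `S` is connected and meets `C` without lying in it, so it leaves `{g < 1/2}`.
  obtain ⟨z, hzS, hz⟩ : ∃ z ∈ S, 1 / 2 ≤ g z := by
    by_contra! hSV
    have hSx₀ := hS.subset_connectedComponentIn (F := {x | g x < 1 / 2}) hx₀S hSV
    rw [← connectedComponentIn_eq hx₀C] at hSx₀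
    exact hSC hSx₀
  refine hS.image_of_continuousOn_minorant (continuous_plateauRamp.comp hg).continuousOn
    (fun x _ ↦ plateauRamp_le_componentJump) hzS (fun x _ ↦ ?_) (fun x _ y _ hyx ↦ ?_)
  · rw [Function.comp_apply, plateauRamp_of_ge hz]
    exact (componentJump_mem_Icc hg₀ x).2
  · refine componentJump_of_ge (le_of_not_gt fun hx ↦ ?_)
    have := half_le_plateauRamp (g y)
    simp only [Function.comp_apply, plateauRamp_of_le hx.le] at hyx
    linarith

theorem preserving_componentJump (hg : Continuous g) (hg₀ : ∀ x, 0 ≤ g x) :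
    Preserving (componentJump g p) :=
  ⟨fun _ ↦ isCompact_image_componentJump hg, fun _ ↦ isPreconnected_image_componentJump hg hg₀⟩

theorem not_continuousAt_componentJump (hg : Continuous g) (hp : g p = 0)
    (hC : connectedComponentIn {x | g x < 1 / 2} p ∉ 𝓝 p) :
    ¬ ContinuousAt (componentJump g p) p := by
  intro hcont
  have hpC : p ∈ connectedComponentIn {x | g x < 1 / 2} p :=
    mem_connectedComponentIn (by simp [hp])
  have hjump : {x | 1 / 2 < componentJump g p x} ∈ 𝓝 p := by
    refine hcont.preimage_mem_nhds (Ioi_mem_nhds ?_)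
    rw [componentJump_of_mem hpC, hp, peakedRamp_zero]
    norm_num
  have hsmall : {x | g x < 1 / 4} ∈ 𝓝 p := (isOpen_lt hg continuous_const).mem_nhds (by simp [hp])
  refine hC (mem_of_superset (inter_mem hjump hsmall) fun x ⟨hx, hgx⟩ ↦ ?_)
  by_contra hxC
  rw [mem_ofPred_eq, componentJump_of_notMem hxC, plateauRamp_of_le (le_of_lt hgx)] at hx
  exact lt_irrefl _ hx

end ComponentJump

theorem stmt1 {X : Type*} [TopologicalSpace X] [T35Space X] (p : X)
    (h : ∃ U : Set X, IsOpen U ∧ p ∈ U ∧ connectedComponentIn U p ∉ 𝓝 p) :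
    ∃ f : X → Set.Icc (0 : ℝ) 1, Preserving f ∧ ¬ ContinuousAt f p := by
  obtain ⟨U, hUo, hpU, hU⟩ := h
  obtain ⟨g, hg, hgp, hgU⟩ :=
    CompletelyRegularSpace.completely_regular p Uᶜ hUo.isClosed_compl (not_not_intro hpU)
  have hg₀ : ∀ x, 0 ≤ (g x : ℝ) := fun x ↦ (g x).2.1
  have hVU : {x | (g x : ℝ) < 1 / 2} ⊆ U := fun x hx ↦ by
    by_contra hxU
    norm_num [hgU hxU] at hx
  refine ⟨codRestrict (componentJump (fun x ↦ (g x : ℝ)) p) _ (componentJump_mem_Icc hg₀), ?_, ?_⟩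
  · rw [← IsEmbedding.subtypeVal.preserving_comp_iff]
    exact preserving_componentJump (continuous_subtype_val.comp hg) hg₀
  · rw [continuousAt_codRestrict_iff]
    exact not_continuousAt_componentJump (continuous_subtype_val.comp hg) (by simp [hgp])
      fun hC ↦ hU (mem_of_superset hC (connectedComponentIn_mono p hVU))
end

section
/- Suppose f : X → Y is a preserving function into a completely regular Hausdorff space Y, and f is not continuous at p ∈ X. Then there exists a preserving function h : X → [0,1] which is not continuous at p. -/
open Filter Topology

/-!
Since `Y` is completely regular, its topology is the initial topology for the continuous maps
`Y → [0,1]`, so a discontinuity of `f` at `p` is already witnessed by `g ∘ f` for one such `g`: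
take `g` vanishing at `f p` and equal to `1` off an open set `U ∋ f p` whose preimage is not a
neighbourhood of `p`. Post-composing with a continuous map keeps a function preserving.
-/

open unitInterval

theorem Preserving.comp {X Y Z : Type*} [TopologicalSpace X] [TopologicalSpace Y]
    [TopologicalSpace Z] {g : Y → Z} {f : X → Y} (hg : Continuous g) (hf : Preserving f) :
    Preserving (g ∘ f) := by
  refine ⟨fun K hK => ?_, fun C hC => ?_⟩
  · rw [Set.image_comp]
    exact (hf.1 K hK).image hg
  · rw [Set.image_comp]
    exact (hf.2 C hC).image g hg.continuousOn

theorem exists_continuous_unitInterval_not_continuousAt_comp {X Y : Type*} [TopologicalSpace X]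
    [TopologicalSpace Y] [CompletelyRegularSpace Y] {f : X → Y} {p : X}
    (hp : ¬ ContinuousAt f p) : ∃ g : Y → I, Continuous g ∧ ¬ ContinuousAt (g ∘ f) p := by
  contrapose! hp
  refine (nhds_basis_opens (f p)).tendsto_right_iff.mpr fun U ⟨hfpU, hU⟩ => ?_
  obtain ⟨g, hg, hg0, hg1⟩ := CompletelyRegularSpace.completely_regular_isOpen (f p) U hU hfpU
  have hne : ∀ᶠ x in 𝓝 p, g (f x) ≠ 1 :=
    (hp g hg).eventually_ne (by simp [Function.comp, hg0])
  filter_upwards [hne] with x hx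
  by_contra hxU
  exact hx (hg1 hxU)

theorem stmt2 {X Y : Type*} [TopologicalSpace X] [TopologicalSpace Y] [T35Space Y]
    (f : X → Y) (hf : Preserving f) (p : X) (hp : ¬ ContinuousAt f p) :
    ∃ h : X → Set.Icc (0 : ℝ) 1, Preserving h ∧ ¬ ContinuousAt h p := by
  obtain ⟨g, hg, hgf⟩ := exists_continuous_unitInterval_not_continuousAt_comp hp
  exact ⟨g ∘ f, hf.comp hg, hgf⟩
end

section
/- Let f : X → Y be a compactness preserving function into a Hausdorff space Y, and let M ⊆ X be a set whose closure is compact and with f(M) infinite. Then every accumulation point y of f(M) has the form y = f(x) for some accumulation point x of M; that is, (f(M))' ⊆ f(M'). -/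
/-!
If no point of `f⁻¹{y}` accumulates at `M`, then `K = closure (M \ f⁻¹{y})` is a compact set
missing `f⁻¹{y}`. Its image is compact, hence closed in the Hausdorff space `Y`, contains
`f(M) \ {y}` and misses `y`; so `y` is not an accumulation point of `f(M)`.
-/

open Filter Topology Set

theorem disjoint_closure_sdiff_of_forall_not_accPt {X : Type*} [TopologicalSpace X]
    {S M : Set X} (h : ∀ x ∈ S, ¬AccPt x (𝓟 M)) : Disjoint S (closure (M \ S)) := by
  refine Set.disjoint_left.2 fun x hxS hx ↦ h x hxS ?_
  rw [accPt_principal_iff_clusterPt, ← mem_closure_iff_clusterPt]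
  exact closure_mono (sdiff_subset_sdiff_right (singleton_subset_iff.2 hxS)) hx

theorem stmt3_general {X Y : Type*} [TopologicalSpace X] [TopologicalSpace Y] [T2Space Y]
    (f : X → Y) (hf : ∀ K : Set X, IsCompact K → IsCompact (f '' K))
    (M : Set X) (hM : IsCompact (closure M)) :
    ∀ y : Y, AccPt y (𝓟 (f '' M)) → ∃ x : X, AccPt x (𝓟 M) ∧ f x = y := by
  intro y hy
  by_contra! hnot
  set K := closure (M \ f ⁻¹' {y})
  have hK : IsCompact K := hM.of_isClosed_subset isClosed_closure (closure_mono sdiff_subset)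
  have hyK : y ∉ f '' K := by
    rintro ⟨x, hxK, rfl⟩
    exact disjoint_closure_sdiff_of_forall_not_accPt (fun x hx hacc ↦ hnot x hacc hx)
      |>.notMem_of_mem_left (mem_preimage.2 rfl) hxK
  have hsub : closure (f '' M \ {y}) ⊆ f '' K := by
    rw [(hf K hK).isClosed.closure_subset_iff, ← image_sdiff_preimage]
    exact image_mono subset_closure
  exact hyK (hsub (mem_closure_iff_clusterPt.2 (accPt_principal_iff_clusterPt.1 hy)))

theorem stmt3 {X Y : Type*} [TopologicalSpace X] [TopologicalSpace Y] [T2Space Y]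
    (f : X → Y) (hf : ∀ K : Set X, IsCompact K → IsCompact (f '' K))
    (M : Set X) (hM : IsCompact (closure M)) (hMinf : (f '' M).Infinite) :
    ∀ y : Y, AccPt y (𝓟 (f '' M)) → ∃ x : X, AccPt x (𝓟 M) ∧ f x = y :=
  stmt3_general f hf M hM
end

section
/- If f : X → Y preserves connectedness, Y is a T₁ space, and C ⊆ X is connected, then f(closure(C)) ⊆ closure(f(C)). -/
/-! If `x ∈ closure C` then `insert x C` is preconnected, hence so is its image
`insert (f x) (f '' C)`. In a T₁ space the closed sets `{f x}` and `closure (f '' C)` cover this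
image, so if `f x ∉ closure (f '' C)` they separate it, which forces `f '' C` to be empty. -/

theorem IsPreconnected.mem_closure_of_insert {Y : Type*} [TopologicalSpace Y] [T1Space Y]
    {y : Y} {S : Set Y} (hS : S.Nonempty) (h : IsPreconnected (insert y S)) :
    y ∈ closure S := by
  by_contra hy
  have hdisj : insert y S ∩ ({y} ∩ closure S) = ∅ := by
    simp [hy]
  rcases isPreconnected_iff_subset_of_disjoint_closed.mp h {y} (closure S) isClosed_singleton
      isClosed_closure (Set.insert_subset_insert subset_closure) hdisj with hsub | hsub
  · obtain ⟨s, hs⟩ := hS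
    obtain rfl : s = y := hsub (Set.mem_insert_of_mem y hs)
    exact hy (subset_closure hs)
  · exact hy (hsub (Set.mem_insert y S))

theorem IsPreconnected.insert_of_mem_closure {X : Type*} [TopologicalSpace X] {x : X}
    {C : Set X} (hC : IsPreconnected C) (hx : x ∈ closure C) : IsPreconnected (insert x C) :=
  hC.subset_closure (Set.subset_insert x C) (Set.insert_subset hx subset_closure)

theorem stmt5 {X Y : Type*} [TopologicalSpace X] [TopologicalSpace Y] [T1Space Y]
    (f : X → Y) (hf : ∀ C : Set X, IsPreconnected C → IsPreconnected (f '' C))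
    (C : Set X) (hC : IsPreconnected C) :
    f '' closure C ⊆ closure (f '' C) := by
  rintro _ ⟨x, hx, rfl⟩
  have hCne : C.Nonempty := closure_nonempty_iff.mp ⟨x, hx⟩
  have himage := hf _ (hC.insert_of_mem_closure hx)
  rw [Set.image_insert_eq] at himage
  exact himage.mem_closure_of_insert (hCne.image f)
end

section
/- Let f : X → Y be a connectedness preserving function from a locally connected space X into a T₁ space Y. If F ⊆ Y is closed and p lies in the closure of f⁻¹(F) but not in f⁻¹(F), then p lies in the closure of the set of points x ∈ f⁻¹(F) at which f is not locally constant. -/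
/-! Take a connected open neighbourhood `V` of `p` and a point `x ∈ V` with `f x ∈ F`. If `f`
were locally constant at every point of `V ∩ f⁻¹' F`, then `f` would be constant on all of `V`:
the component of `{f = f x} ∩ V` through `x` is open, and it is closed in `V` because a
connectedness preserving map into a T₁ space that is constant on a preconnected set is constant
on its closure. Then `f p = f x ∈ F`, a contradiction. -/

open Filter Topology

/-- `f` is locally constant at `x` if it is constant on some neighbourhood of `x`. -/
def LocallyConstantAt {X Y : Type*} [TopologicalSpace X] (f : X → Y) (x : X) : Prop :=
  ∃ U ∈ 𝓝 x, ∀ z ∈ U, f z = f x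

theorem eq_of_isPreconnected_pair {Y : Type*} [TopologicalSpace Y] [T1Space Y] {a b : Y}
    (h : IsPreconnected ({a, b} : Set Y)) : a = b := by
  by_contra hab
  obtain ⟨y, hy, hyb, hya⟩ := h {b}ᶜ {a}ᶜ isOpen_compl_singleton isOpen_compl_singleton
    (by rintro y (rfl | rfl); exacts [Or.inl hab, Or.inr (Ne.symm hab)])
    ⟨a, Or.inl rfl, hab⟩ ⟨b, Or.inr rfl, Ne.symm hab⟩
  rcases hy with rfl | rfl
  exacts [hya rfl, hyb rfl]

section ConnectednessPreserving

variable {X Y : Type*} [TopologicalSpace X] [TopologicalSpace Y] {f : X → Y}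

/-- Adjoining a closure point `z` keeps `K` preconnected, so its image `{f z, y}` is a
preconnected pair. -/
theorem eq_on_closure_of_preservesPreconnected [T1Space Y]
    (hf : ∀ C : Set X, IsPreconnected C → IsPreconnected (f '' C)) {K : Set X}
    (hK : IsPreconnected K) {y : Y} (hKy : ∀ x ∈ K, f x = y) :
    ∀ z ∈ closure K, f z = y := by
  intro z hz
  obtain ⟨x, hx⟩ := (closure_nonempty_iff.mp ⟨z, hz⟩)
  have hzK : IsPreconnected (insert z K) :=
    hK.subset_closure (Set.subset_insert z K) (Set.insert_subset hz subset_closure)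
  have himage : f '' insert z K = {f z, y} := by
    apply Set.Subset.antisymm
    · rintro _ ⟨w, rfl | hw, rfl⟩
      exacts [Or.inl rfl, Or.inr (hKy w hw)]
    · rintro _ (rfl | rfl)
      exacts [⟨z, Set.mem_insert z K, rfl⟩, ⟨x, Set.mem_insert_of_mem z hx, hKy x hx⟩]
  exact eq_of_isPreconnected_pair (himage ▸ hf _ hzK)

theorem eq_on_of_preservesPreconnected_of_locallyConstantAt [LocallyConnectedSpace X]
    [T1Space Y] (hf : ∀ C : Set X, IsPreconnected C → IsPreconnected (f '' C)) {V : Set X}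
    (hVo : IsOpen V) (hVc : IsPreconnected V) {x : X} (hx : x ∈ V)
    (hlc : ∀ z ∈ V, f z = f x → LocallyConstantAt f z) : ∀ z ∈ V, f z = f x := by
  set S := V ∩ f ⁻¹' {f x}
  have hSo : IsOpen S := by
    refine isOpen_iff_mem_nhds.mpr fun z ⟨hzV, hzx⟩ => ?_
    obtain ⟨W, hW, hWz⟩ := hlc z hzV hzx
    filter_upwards [inter_mem hW (hVo.mem_nhds hzV)] with w ⟨hwW, hwV⟩
    exact ⟨hwV, (hWz w hwW).trans hzx⟩
  set K := connectedComponentIn S x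
  have hxK : x ∈ K := mem_connectedComponentIn ⟨hx, rfl⟩
  have hKS : K ⊆ S := connectedComponentIn_subset S x
  have hclosed : closure K ∩ V ⊆ K := by
    refine (isPreconnected_connectedComponentIn.subset_closure ?_
      Set.inter_subset_left).subset_connectedComponentIn ⟨subset_closure hxK, hx⟩
      fun z ⟨hzK, hzV⟩ => ⟨hzV, ?_⟩
    · exact Set.subset_inter subset_closure fun w hw => (hKS hw).1
    · exact eq_on_closure_of_preservesPreconnected hf isPreconnected_connectedComponentIn
        (fun w hw => (hKS hw).2) z hzK
  intro z hz
  exact (hKS (hVc.subset_of_closure_inter_subset hSo.connectedComponentIn ⟨x, hx, hxK⟩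
    hclosed hz)).2

end ConnectednessPreserving

theorem stmt6_general {X Y : Type*} [TopologicalSpace X] [TopologicalSpace Y]
    [LocallyConnectedSpace X] [T1Space Y]
    (f : X → Y) (hf : ∀ C : Set X, IsPreconnected C → IsPreconnected (f '' C))
    (F : Set Y) (p : X)
    (hp : p ∈ closure (f ⁻¹' F)) (hp' : p ∉ f ⁻¹' F) :
    p ∈ closure {x | x ∈ f ⁻¹' F ∧ ¬ LocallyConstantAt f x} := by
  rw [mem_closure_iff_nhds] at hp ⊢
  intro U hU
  obtain ⟨V, hVU, hVo, hpV, hVc⟩ :=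
    locallyConnectedSpace_iff_subsets_isOpen_isConnected.mp ‹_› p U hU
  obtain ⟨x, hxV, hxF⟩ := hp V (hVo.mem_nhds hpV)
  by_contra! hU
  have hlc : ∀ z ∈ V, f z = f x → LocallyConstantAt f z := fun z hzV hzx => by
    by_contra hz
    exact hU.subset ⟨hVU hzV, show f z ∈ F from hzx ▸ hxF, hz⟩
  have hpx : f p = f x :=
    eq_on_of_preservesPreconnected_of_locallyConstantAt hf hVo hVc.isPreconnected hxV hlc p hpV
  exact hp' (show f p ∈ F from hpx ▸ hxF)

theorem stmt6 {X Y : Type*} [TopologicalSpace X] [TopologicalSpace Y]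
    [LocallyConnectedSpace X] [T1Space Y]
    (f : X → Y) (hf : ∀ C : Set X, IsPreconnected C → IsPreconnected (f '' C))
    (F : Set Y) (hF : IsClosed F) (p : X)
    (hp : p ∈ closure (f ⁻¹' F)) (hp' : p ∉ f ⁻¹' F) :
    p ∈ closure {x | x ∈ f ⁻¹' F ∧ ¬ LocallyConstantAt f x} :=
  stmt6_general f hf F p hp hp'
end

section
/- Let f : X → Y be a connectedness preserving function into a T₁ space Y. If X is locally connected at p and f is not locally constant at p, then f(U) ∩ V is infinite for every neighbourhood U of p and every neighbourhood V of f(p). -/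
open Filter Topology

/-! Shrink `U` to a connected neighbourhood `W` of `p`. Then `f '' W` is connected, contains `f p`
and, as `f` is not locally constant at `p`, another point; a nontrivial connected subset of a
T1 space has no isolated points, so it meets every neighbourhood of `f p` in infinitely many
points. -/

/-- As a subspace, `s` is a nontrivial connected T1 space, hence has no isolated points. -/
theorem IsPreconnected.infinite_inter_of_mem_nhds {X : Type*} [TopologicalSpace X] [T1Space X]
    {s : Set X} (hs : IsPreconnected s) (hnt : s.Nontrivial) {x : X} (hx : x ∈ s) {V : Set X}
    (hV : V ∈ 𝓝 x) : (s ∩ V).Infinite := by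
  have : ConnectedSpace s := Subtype.connectedSpace ⟨⟨x, hx⟩, hs⟩
  have : Nontrivial s := hnt.coe_sort
  have hV' : ((↑) ⁻¹' V : Set s) ∈ 𝓝 (⟨x, hx⟩ : s) :=
    continuous_subtype_val.continuousAt.preimage_mem_nhds hV
  rw [← Subtype.image_preimage_coe]
  exact (infinite_of_mem_nhds _ hV').image Subtype.val_injective.injOn

theorem stmt7 {X Y : Type*} [TopologicalSpace X] [TopologicalSpace Y] [T1Space Y]
    (f : X → Y) (hf : ∀ C : Set X, IsPreconnected C → IsPreconnected (f '' C))
    (p : X)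
    (hlc : ∀ U ∈ 𝓝 p, ∃ V ∈ 𝓝 p, V ⊆ U ∧ IsConnected V)
    (hnc : ¬ LocallyConstantAt f p) :
    ∀ U ∈ 𝓝 p, ∀ V ∈ 𝓝 (f p), (f '' U ∩ V).Infinite := by
  intro U hU V hV
  obtain ⟨W, hW, hWU, hWconn⟩ := hlc U hU
  obtain ⟨z, hzW, hz⟩ : ∃ z ∈ W, f z ≠ f p := by
    by_contra! h
    exact hnc ⟨W, hW, h⟩
  have hpW : p ∈ W := mem_of_mem_nhds hW
  have hnt : (f '' W).Nontrivial := ⟨f z, ⟨z, hzW, rfl⟩, f p, ⟨p, hpW, rfl⟩, hz⟩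
  exact ((hf W hWconn.isPreconnected).infinite_inter_of_mem_nhds hnt ⟨p, hpW, rfl⟩ hV).mono
    (Set.inter_subset_inter_left V (Set.image_mono hWU))
end

section
/- Every nonempty open subset of an infinite connected regular (T₃) space is uncountable. -/
/-!
A countable regular space is Lindelöf, hence normal. If `f` is an Urysohn function for a closed
neighbourhood of `x` and the complement of an open `U ∋ x`, its countable range misses some
`r ∈ (0, 1)`, so `{f < r} = {f ≤ r}` is a clopen neighbourhood of `x` inside `U`. A countable
regular space is therefore totally separated, and a connected one is a point.

If `G` were countable, a closed neighbourhood `t ⊆ G` of a point of `G` would be a countable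
regular subspace, so it would contain a clopen subset of `t` around that point and inside
`interior t`; such a set is clopen in the whole space, hence everything by connectedness. Then
the whole space is countable, connected and regular, hence a point, contradicting infiniteness.
-/

open Set Topology

lemma exists_isClopen_mem_subset_of_countable {X : Type*} [TopologicalSpace X] [RegularSpace X]
    [Countable X] {x : X} {U : Set X} (hU : IsOpen U) (hx : x ∈ U) :
    ∃ V, IsClopen V ∧ x ∈ V ∧ V ⊆ U := by
  obtain ⟨c, hc, hc_closed, hcU⟩ := exists_mem_nhds_isClosed_subset (hU.mem_nhds hx)
  obtain ⟨f, hf0, hf1, -⟩ := exists_continuous_zero_one_of_isClosed hc_closed hU.isClosed_compl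
    (disjoint_compl_right_iff_subset.mpr hcU)
  obtain ⟨r, hr_range, hr0, hr1⟩ :=
    ((countable_range f).dense_compl ℝ).exists_between zero_lt_one
  have hlt_eq_le : f ⁻¹' Iio r = f ⁻¹' Iic r := by
    ext y
    exact lt_iff_le_and_ne.trans (and_iff_left fun h ↦ hr_range ⟨y, h⟩)
  refine ⟨f ⁻¹' Iio r, ⟨?_, isOpen_Iio.preimage f.continuous⟩, ?_, fun y hy ↦ ?_⟩
  · rw [hlt_eq_le]
    exact isClosed_Iic.preimage f.continuous
  · simpa [hf0 (mem_of_mem_nhds hc)] using hr0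
  · by_contra hyU
    exact (hr1.trans_eq (hf1 hyU).symm).not_gt hy

lemma subsingleton_of_countable_of_preconnected (X : Type*) [TopologicalSpace X] [T3Space X]
    [PreconnectedSpace X] [Countable X] : Subsingleton X := by
  refine ⟨fun a b ↦ by_contra fun hab ↦ ?_⟩
  obtain ⟨V, hV, haV, hVb⟩ := exists_isClopen_mem_subset_of_countable isOpen_compl_singleton
    (mem_compl_singleton_iff.mpr hab)
  exact hVb (hV.eq_univ ⟨a, haV⟩ ▸ mem_univ b) rfl

lemma IsClopen.image_val_of_subset_interior {X : Type*} [TopologicalSpace X] {t : Set X}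
    (ht : IsClosed t) {W : Set t} (hW : IsClopen W) (hWt : (↑) '' W ⊆ interior t) :
    IsClopen ((↑) '' W : Set X) := by
  refine ⟨ht.isClosedMap_subtype_val _ hW.isClosed, isOpen_iff_mem_nhds.mpr ?_⟩
  rintro _ ⟨w, hw, rfl⟩
  rw [← nhdsWithin_eq_nhds.mpr (mem_interior_iff_mem_nhds.mp (hWt ⟨w, hw, rfl⟩)),
    ← map_nhds_subtype_val]
  exact Filter.image_mem_map (hW.isOpen.mem_nhds hw)

theorem stmt9 {Z : Type*} [TopologicalSpace Z] [T3Space Z] [Infinite Z] [ConnectedSpace Z]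
    (G : Set Z) (hG : IsOpen G) (hne : G.Nonempty) : ¬ G.Countable := by
  intro hG_countable
  obtain ⟨x, hx⟩ := hne
  obtain ⟨t, ht, ht_closed, htG⟩ := exists_mem_nhds_isClosed_subset (hG.mem_nhds hx)
  have : Countable t := (hG_countable.mono htG).to_subtype
  obtain ⟨W, hW, hxW, hW_interior⟩ :=
    exists_isClopen_mem_subset_of_countable (x := ⟨x, mem_of_mem_nhds ht⟩)
      (isOpen_interior.preimage continuous_subtype_val) (mem_interior_iff_mem_nhds.mpr ht)
  have hW_univ : ((↑) '' W : Set Z) = univ :=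
    (hW.image_val_of_subset_interior ht_closed (image_subset_iff.mpr hW_interior)).eq_univ
      ⟨x, _, hxW, rfl⟩
  have : Countable Z := countable_univ_iff.mp <|
    hG_countable.mono (hW_univ ▸ (image_subset_range _ _).trans (by simpa using htG))
  have := subsingleton_of_countable_of_preconnected Z
  exact not_finite Z
end

section
/- Let X be a topological space and x a point that is both a Fréchet–Urysohn point and a sequentially connectible (SC) point. Then X is locally connected at x. -/
/-!
The candidate neighbourhood of `x` inside `U ∈ 𝓝 x` is the connected component of `x` in `U`.
If it were not a neighbourhood, `x` would lie in the closure of its complement, and the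
Fréchet–Urysohn property gives a sequence outside the component converging to `x`. The SC
property joins some term of that sequence to `x` by a preconnected set which eventually lies
in `U`, so that term lies in the component after all.
-/

open Filter Topology

/-- `x` is a sequentially connectible (SC) point. -/
def SCPoint {X : Type*} [TopologicalSpace X] (x : X) : Prop :=
  ∀ u : ℕ → X, Tendsto u atTop (𝓝 x) →
    ∃ φ : ℕ → ℕ, StrictMono φ ∧ ∃ C : ℕ → Set X,
      (∀ k, IsPreconnected (C k) ∧ u (φ k) ∈ C k ∧ x ∈ C k) ∧
      ∀ U ∈ 𝓝 x, ∀ᶠ k in atTop, C k ⊆ U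

/-- `x` is a Fréchet–Urysohn point. -/
def FrechetPoint {X : Type*} [TopologicalSpace X] (x : X) : Prop :=
  ∀ A : Set X, x ∈ closure A →
    ∃ u : ℕ → X, (∀ n, u n ∈ A) ∧ Tendsto u atTop (𝓝 x)

section

variable {X : Type*} [TopologicalSpace X] {x : X}

theorem FrechetPoint.mem_nhds_of_forall_tendsto {S : Set X} (hF : FrechetPoint x)
    (hS : ∀ u : ℕ → X, Tendsto u atTop (𝓝 x) → ∃ n, u n ∈ S) : S ∈ 𝓝 x := by
  by_contra hSx
  have hx : x ∈ closure Sᶜ := by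
    rwa [closure_compl, Set.mem_compl_iff, mem_interior_iff_mem_nhds]
  obtain ⟨u, huS, hux⟩ := hF Sᶜ hx
  obtain ⟨n, hn⟩ := hS u hux
  exact huS n hn

theorem SCPoint.exists_mem_connectedComponentIn {U : Set X} (hSC : SCPoint x) (hU : U ∈ 𝓝 x)
    {u : ℕ → X} (hux : Tendsto u atTop (𝓝 x)) : ∃ n, u n ∈ connectedComponentIn U x := by
  obtain ⟨φ, -, C, hC, hCx⟩ := hSC u hux
  obtain ⟨k, hkU⟩ := (hCx U hU).exists
  obtain ⟨hCk, huk, hxk⟩ := hC k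
  exact ⟨φ k, hCk.subset_connectedComponentIn hxk hkU huk⟩

theorem connectedComponentIn_mem_nhds_of_frechetPoint_of_scPoint (hF : FrechetPoint x)
    (hSC : SCPoint x) {U : Set X} (hU : U ∈ 𝓝 x) : connectedComponentIn U x ∈ 𝓝 x :=
  hF.mem_nhds_of_forall_tendsto fun _ hux => hSC.exists_mem_connectedComponentIn hU hux

end

theorem stmt10 {X : Type*} [TopologicalSpace X] (x : X)
    (hF : FrechetPoint x) (hSC : SCPoint x) :
    ∀ U ∈ 𝓝 x, ∃ V ∈ 𝓝 x, V ⊆ U ∧ IsConnected V := fun U hU =>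
  ⟨connectedComponentIn U x, connectedComponentIn_mem_nhds_of_frechetPoint_of_scPoint hF hSC hU,
    connectedComponentIn_subset U x,
    isConnected_connectedComponentIn_iff.2 (mem_of_mem_nhds hU)⟩
end

section
/- Let x be a point of a topological space X that has a neighbourhood base B such that the intersection of every nonempty subfamily of B is connected (a strong local connectivity point). Then x is a sequentially connectible (SC) point of X. -/
open Filter Topology

section

variable {X : Type*} [TopologicalSpace X] {x : X}

theorem SCPoint.of_tendsto_smallSets (C : X → Set X)
    (hC : ∀ᶠ y in 𝓝 x, IsPreconnected (C y) ∧ y ∈ C y ∧ x ∈ C y)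
    (hshrink : Tendsto C (𝓝 x) (𝓝 x).smallSets) :
    SCPoint x := by
  intro u hu
  obtain ⟨N, hN⟩ := eventually_atTop.1 (hu.eventually hC)
  have hshift : Tendsto (fun k => u (k + N)) atTop (𝓝 x) := hu.comp (tendsto_add_atTop_nat N)
  exact ⟨(· + N), strictMono_id.add_const N, fun k => C (u (k + N)),
    fun k => hN (k + N) (Nat.le_add_left N k),
    tendsto_smallSets_iff.1 (hshrink.comp hshift)⟩

theorem tendsto_sInter_mem_smallSets {B : Set (Set X)} (hBnhds : ∀ V ∈ B, V ∈ 𝓝 x)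
    (hBbasis : ∀ U ∈ 𝓝 x, ∃ V ∈ B, V ⊆ U) :
    Tendsto (fun y => ⋂₀ {V ∈ B | y ∈ V}) (𝓝 x) (𝓝 x).smallSets := by
  refine tendsto_smallSets_iff.2 fun U hU => ?_
  obtain ⟨V, hVB, hVU⟩ := hBbasis U hU
  filter_upwards [hBnhds V hVB] with y hy
  exact (Set.sInter_subset_of_mem (S := {V ∈ B | y ∈ V}) ⟨hVB, hy⟩).trans hVU

end

theorem stmt11 {X : Type*} [TopologicalSpace X] (x : X)
    (B : Set (Set X))
    (hBnhds : ∀ V ∈ B, V ∈ 𝓝 x)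
    (hBbasis : ∀ U ∈ 𝓝 x, ∃ V ∈ B, V ⊆ U)
    (hBconn : ∀ S ⊆ B, S.Nonempty → IsPreconnected (⋂₀ S)) :
    SCPoint x := by
  refine SCPoint.of_tendsto_smallSets _ ?_ (tendsto_sInter_mem_smallSets hBnhds hBbasis)
  -- `hBconn` needs `{V ∈ B | y ∈ V}` nonempty, which holds once `y` lies in one basic set `V₀`
  obtain ⟨V₀, hV₀B, -⟩ := hBbasis Set.univ univ_mem
  filter_upwards [hBnhds V₀ hV₀B] with y hy
  exact ⟨hBconn _ (fun V hV => hV.1) ⟨V₀, hV₀B, hy⟩, Set.mem_sInter.2 fun V hV => hV.2,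
    Set.mem_sInter.2 fun V hV => mem_of_mem_nhds (hBnhds V hV.1)⟩
end

section
/- Let f : X → Y be a preserving function into a Hausdorff space Y. Then f is sequentially continuous at every SC point of X; that is, if x is an SC point and x_n → x, then f(x_n) → f(x). -/
/-!
Suppose `f (u n)` leaves an open neighbourhood of `f x` infinitely often. Since `f` maps the
compact set `{x} ∪ {u n}` and its tails to compact, hence closed, sets, every cluster point of
`f ∘ u` other than `f x` is a value taken infinitely often; so we may assume `f (u n) = z ≠ f x`
for all `n`. The SC property then gives connected sets `C k → x` with `z, f x ∈ f (C k)`.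
Separate `z` from `f x` by an open `W`. Only finitely many values in `closure W` lie in
infinitely many `f (C k)`: otherwise picking distinct ones gives a sequence converging to `x`
whose image has no repeated value, against the first step. Shrinking `W` to an open `G ∋ z`
whose closure avoids the other such values, each connected `f (C k)` crosses `frontier G`,
and the first step applied to the crossing points produces one more such value in
`frontier G`, a contradiction.
-/

open Filter Topology Set

theorem IsPreconnected.inter_frontier_nonempty {Y : Type*} [TopologicalSpace Y] {S G : Set Y}
    (hS : IsPreconnected S) (hSG : (S ∩ G).Nonempty) (hSG' : (S \ G).Nonempty) :
    (S ∩ frontier G).Nonempty := by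
  by_contra h
  have hint : closure G ∩ S ⊆ interior G := fun y ⟨hyc, hyS⟩ =>
    by_contra fun hyi => h ⟨y, hyS, hyc, hyi⟩
  obtain ⟨p, hpS, hpG⟩ := hSG
  obtain ⟨q, hqS, hqG⟩ := hSG'
  have hSint : S ⊆ interior G :=
    hS.subset_of_closure_inter_subset isOpen_interior ⟨p, hpS, hint ⟨subset_closure hpG, hpS⟩⟩
      ((inter_subset_inter_left _ (closure_mono interior_subset)).trans hint)
  exact hqG (interior_subset (hSint hqS))

section Preserving

variable {X Y : Type*} [TopologicalSpace X] [TopologicalSpace Y] {f : X → Y} {x : X}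

theorem frequently_eq_of_mapClusterPt [T2Space Y]
    (hf : ∀ K : Set X, IsCompact K → IsCompact (f '' K)) {c : ℕ → X}
    (hc : Tendsto c atTop (𝓝 x)) {z : Y} (hz : MapClusterPt z atTop (f ∘ c)) (hzx : z ≠ f x) :
    ∃ᶠ k in atTop, f (c k) = z := by
  rw [frequently_atTop]
  intro N
  have htail : Tendsto (fun k => c (k + N)) atTop (𝓝 x) := hc.comp (tendsto_add_atTop_nat N)
  have hclosed : IsClosed (f '' insert x (range fun k => c (k + N))) :=
    (hf _ htail.isCompact_insert_range).isClosed
  have hzmem : z ∈ f '' insert x (range fun k => c (k + N)) :=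
    hclosed.mem_of_mapClusterPt hz <| eventually_atTop.2 ⟨N, fun k hk =>
      ⟨c k, mem_insert_of_mem _ ⟨k - N, show c (k - N + N) = c k by rw [Nat.sub_add_cancel hk]⟩, rfl⟩⟩
  rw [image_insert_eq] at hzmem
  rcases hzmem with hzx' | ⟨_, ⟨k, rfl⟩, hk⟩
  · exact absurd hzx' hzx
  · exact ⟨k + N, Nat.le_add_left _ _, hk⟩

theorem exists_frequently_eq_of_frequently_mem [T2Space Y]
    (hf : ∀ K : Set X, IsCompact K → IsCompact (f '' K)) {c : ℕ → X}
    (hc : Tendsto c atTop (𝓝 x)) {F : Set Y} (hF : IsClosed F) (hxF : f x ∉ F)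
    (h : ∃ᶠ k in atTop, f (c k) ∈ F) :
    ∃ z ∈ F, ∃ᶠ k in atTop, f (c k) = z := by
  have hK : IsCompact (F ∩ f '' insert x (range c)) :=
    (hf _ hc.isCompact_insert_range).inter_left hF
  obtain ⟨z, hz, hcl⟩ := hK.exists_mapClusterPt_of_frequently (f := f ∘ c) <|
    h.mono fun k hk => ⟨hk, c k, mem_insert_of_mem _ ⟨k, rfl⟩, rfl⟩
  exact ⟨z, hz.1, frequently_eq_of_mapClusterPt hf hc hcl fun hzx => hxF (hzx ▸ hz.1)⟩

variable {C : ℕ → Set X}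

theorem exists_mem_frontier_frequently_mem_image [T2Space Y] (hf : Preserving f)
    (hC : ∀ k, IsPreconnected (C k)) (hxC : ∀ k, x ∈ C k)
    (hCx : Tendsto C atTop (𝓝 x).smallSets) {z : Y} (hz : ∃ᶠ k in atTop, z ∈ f '' C k)
    {G : Set Y} (hzG : z ∈ G) (hxG : f x ∉ closure G) :
    ∃ z' ∈ frontier G, ∃ᶠ k in atTop, z' ∈ f '' C k := by
  have hcross : ∀ k, ∃ c ∈ C k, z ∈ f '' C k → f c ∈ frontier G := by
    intro k
    by_cases hk : z ∈ f '' C k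
    · obtain ⟨_, ⟨c, hc, rfl⟩, hcG⟩ := (hf.2 _ (hC k)).inter_frontier_nonempty
        ⟨z, hk, hzG⟩ ⟨f x, mem_image_of_mem f (hxC k), fun h => hxG (subset_closure h)⟩
      exact ⟨c, hc, fun _ => hcG⟩
    · exact ⟨x, hxC k, fun h => absurd h hk⟩
  choose c hcC hcG using hcross
  have hc : Tendsto c atTop (𝓝 x) := hCx.of_smallSets (Eventually.of_forall hcC)
  obtain ⟨z', hz'G, hz'⟩ := exists_frequently_eq_of_frequently_mem hf.1 hc isClosed_frontier
    (fun h => hxG (frontier_subset_closure h)) (hz.mono hcG)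
  exact ⟨z', hz'G, hz'.mono fun k hk => ⟨c k, hcC k, hk⟩⟩

theorem finite_setOf_frequently_mem_image [T2Space Y]
    (hf : ∀ K : Set X, IsCompact K → IsCompact (f '' K))
    (hCx : Tendsto C atTop (𝓝 x).smallSets) {F : Set Y} (hF : IsClosed F) (hxF : f x ∉ F) :
    {z ∈ F | ∃ᶠ k in atTop, z ∈ f '' C k}.Finite := by
  by_contra hinf
  let e := Set.Infinite.natEmbedding _ hinf
  have hpick : ∀ m, ∃ k ≥ m, ∃ b ∈ C k, f b = e m := fun m => frequently_atTop.1 (e m).2.2 m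
  choose κ hκ b hbC hbe using hpick
  have hb : Tendsto b atTop (𝓝 x) :=
    (hCx.comp (tendsto_atTop_mono hκ tendsto_id)).of_smallSets (Eventually.of_forall hbC)
  obtain ⟨z, -, hz⟩ := exists_frequently_eq_of_frequently_mem hf hb hF hxF
    (Frequently.of_forall fun m => (hbe m).symm ▸ (e m).2.1)
  have hsub : {m | f (b m) = z}.Subsingleton := fun m hm m' hm' =>
    e.injective (Subtype.ext ((hbe m).symm.trans (hm.trans (hm'.symm.trans (hbe m')))))
  exact Nat.frequently_atTop_iff_infinite.1 hz hsub.finite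

theorem not_frequently_mem_image [T2Space Y] (hf : Preserving f)
    (hC : ∀ k, IsPreconnected (C k)) (hxC : ∀ k, x ∈ C k)
    (hCx : Tendsto C atTop (𝓝 x).smallSets) {z : Y} (hzx : z ≠ f x) :
    ¬∃ᶠ k in atTop, z ∈ f '' C k := by
  intro hz
  obtain ⟨W, V, hW, hV, hzW, hxV, hWV⟩ := t2_separation hzx
  have hxW : f x ∉ closure W := fun h => (hWV.closure_left hV).notMem_of_mem_left h hxV
  set Z := {z' ∈ closure W | ∃ᶠ k in atTop, z' ∈ f '' C k}
  have hZ : Z.Finite := finite_setOf_frequently_mem_image hf.1 hCx isClosed_closure hxW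
  obtain ⟨U, U', hU, hU', hzU, hZU', hUU'⟩ := SeparatedNhds.of_finite (finite_singleton z)
    (hZ.subset sdiff_subset) (disjoint_singleton_left.2 fun h => h.2 rfl)
  have hG : IsOpen (W ∩ U) := hW.inter hU
  obtain ⟨z', hz'G, hz'⟩ := exists_mem_frontier_frequently_mem_image hf hC hxC hCx hz
    (G := W ∩ U) ⟨hzW, hzU rfl⟩ fun h => hxW (closure_mono inter_subset_left h)
  have hz'W : z' ∈ closure W := closure_mono inter_subset_left (frontier_subset_closure hz'G)
  have hz'U : z' ∈ closure U := closure_mono inter_subset_right (frontier_subset_closure hz'G)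
  have hzz' : z ≠ z' := by
    rintro rfl
    exact hz'G.2 (by rw [hG.interior_eq]; exact ⟨hzW, hzU rfl⟩)
  exact (hUU'.closure_left hU').notMem_of_mem_left hz'U (hZU' ⟨⟨hz'W, hz'⟩, hzz'⟩)

end Preserving

theorem stmt12 {X Y : Type*} [TopologicalSpace X] [TopologicalSpace Y] [T2Space Y]
    (f : X → Y) (hf : Preserving f) (x : X) (hx : SCPoint x)
    (u : ℕ → X) (hu : Tendsto u atTop (𝓝 x)) :
    Tendsto (fun n => f (u n)) atTop (𝓝 (f x)) := by
  rw [tendsto_nhds]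
  intro V hV hxV
  by_contra hev
  obtain ⟨z, hzV, hz⟩ := exists_frequently_eq_of_frequently_mem hf.1 hu hV.isClosed_compl
    (not_not_intro hxV) (not_eventually.1 hev)
  obtain ⟨ψ, hψ, hψz⟩ := extraction_of_frequently_atTop hz
  obtain ⟨φ, -, C, hC, hCx⟩ := hx (u ∘ ψ) (hu.comp hψ.tendsto_atTop)
  exact not_frequently_mem_image hf (fun k => (hC k).1) (fun k => (hC k).2.2)
    (tendsto_smallSets_iff.2 hCx) (fun hzx => hzV (by rwa [hzx]))
    (Frequently.of_forall fun k => ⟨u (ψ (φ k)), (hC k).2.1, hψz _⟩)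
end

section
/- Every sequential SC space is locally connected. -/
open Filter Topology

/-! The connected sets `C k` joining `u (φ k)` to `x` eventually lie in any neighbourhood `U` of
`x`, so a sequence converging to `x` returns infinitely often to the component of `x` in `U`. In a
sequential space a set that every sequence converging to one of its points meets infinitely often is
open, so components of open sets are open. -/

section

variable {X : Type*} [TopologicalSpace X]

theorem SCPoint.frequently_mem_connectedComponentIn {x : X} (hx : SCPoint x) {U : Set X}
    (hU : U ∈ 𝓝 x) {u : ℕ → X} (hu : Tendsto u atTop (𝓝 x)) :
    ∃ᶠ n in atTop, u n ∈ connectedComponentIn U x := by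
  obtain ⟨φ, hφ, C, hC, hCU⟩ := hx u hu
  have hsub : ∀ᶠ k in atTop, u (φ k) ∈ connectedComponentIn U x :=
    (hCU U hU).mono fun k hk =>
      (hC k).1.subset_connectedComponentIn (hC k).2.2 hk (hC k).2.1
  exact hφ.tendsto_atTop.frequently hsub.frequently

theorem isOpen_of_frequently_mem_of_tendsto [SequentialSpace X] {s : Set X}
    (hs : ∀ x ∈ s, ∀ u : ℕ → X, Tendsto u atTop (𝓝 x) → ∃ᶠ n in atTop, u n ∈ s) :
    IsOpen s := by
  rw [← isClosed_compl_iff, ← isSeqClosed_iff_isClosed]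
  intro u x hu hux hx
  obtain ⟨n, hn⟩ := (hs x hx u hux).exists
  exact hu n hn

end

theorem stmt13 {X : Type*} [TopologicalSpace X] [SequentialSpace X]
    (hSC : ∀ x : X, SCPoint x) : LocallyConnectedSpace X := by
  rw [locallyConnectedSpace_iff_connectedComponentIn_open]
  intro F hF x _
  refine isOpen_of_frequently_mem_of_tendsto fun y hy u hu => ?_
  rw [connectedComponentIn_eq hy]
  exact (hSC y).frequently_mem_connectedComponentIn
    (hF.mem_nhds (connectedComponentIn_subset F x hy)) hu
end

section
/- If X is a generalized ordered space (e.g., a linearly ordered space with the order topology), then X is inflatable: for every point x and every sequence x_n → x with x_n ≠ x, there exist a subsequence (x_{n_k}) and open neighbourhoods U_k of x_{n_k} such that every neighbourhood of x contains all but finitely many of the U_k. -/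
/-! Infinitely many terms lie on one side of `x`, say below it. Along those terms `v n → x`
the intervals `Ioo (v n) x` shrink to `x`, and each contains a later term `v (φ n)`, of which it
is then an open neighbourhood. The other side is the same argument in the order dual. -/

open Filter Topology Set

theorem exists_subseq_nhds_tendsto_smallSets_of_frequently_lt {X : Type*} [LinearOrder X]
    [TopologicalSpace X] [OrderTopology X] {x : X} {u : ℕ → X} (hu : Tendsto u atTop (𝓝 x))
    (hlt : ∃ᶠ n in atTop, u n < x) :
    ∃ φ : ℕ → ℕ, StrictMono φ ∧ ∃ U : ℕ → Set X,
      (∀ k, U k ∈ 𝓝 (u (φ k))) ∧ Tendsto U atTop (𝓝 x).smallSets := by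
  obtain ⟨ψ, hψ, hψlt⟩ := extraction_of_frequently_atTop hlt
  have hv : Tendsto (u ∘ ψ) atTop (𝓝 x) := hu.comp hψ.tendsto_atTop
  have hbetween : ∀ n, ∀ᶠ k in atTop, u (ψ k) ∈ Ioo (u (ψ n)) x := fun n =>
    (hv.eventually (Ioi_mem_nhds (hψlt n))).mono fun k hk => ⟨hk, hψlt k⟩
  obtain ⟨φ, hφ, hφmem⟩ := extraction_forall_of_eventually hbetween
  refine ⟨ψ ∘ φ, hψ.comp hφ, fun n => Ioo (u (ψ n)) x,
    fun n => isOpen_Ioo.mem_nhds (hφmem n), ?_⟩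
  exact (hv.Icc tendsto_const_nhds).smallSets_mono
    (Eventually.of_forall fun n => Ioo_subset_Icc_self)

theorem stmt15 {X : Type*} [LinearOrder X] [TopologicalSpace X] [OrderTopology X]
    (x : X) (u : ℕ → X) (hu : Tendsto u atTop (𝓝 x)) (hne : ∀ n, u n ≠ x) :
    ∃ φ : ℕ → ℕ, StrictMono φ ∧ ∃ U : ℕ → Set X,
      (∀ k, U k ∈ 𝓝 (u (φ k))) ∧
      ∀ V ∈ 𝓝 x, ∀ᶠ k in atTop, U k ⊆ V := by
  have hside : (∃ᶠ n in atTop, u n < x) ∨ ∃ᶠ n in atTop, x < u n :=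
    frequently_or_distrib.1 (Frequently.of_forall fun n => (hne n).lt_or_gt)
  obtain ⟨φ, hφ, U, hU, hUx⟩ := hside.elim
    (exists_subseq_nhds_tendsto_smallSets_of_frequently_lt hu)
    (exists_subseq_nhds_tendsto_smallSets_of_frequently_lt (X := Xᵒᵈ) hu)
  exact ⟨φ, hφ, U, hU, tendsto_smallSets_iff.1 hUx⟩
end

section
/- Any preserving function f : X → Y from a locally connected space X into a Hausdorff space Y is weakly sequentially continuous at every inflatable point x: if x_n → x and f is not locally constant at each x_n, then f(x_n) → f(x). -/
open Filter Topology

/-- `x` is an inflatable point. -/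
def InflatablePoint {X : Type*} [TopologicalSpace X] (x : X) : Prop :=
  ∀ u : ℕ → X, Tendsto u atTop (𝓝 x) → (∀ n, u n ≠ x) →
    ∃ φ : ℕ → ℕ, StrictMono φ ∧ ∃ U : ℕ → Set X,
      (∀ k, U k ∈ 𝓝 (u (φ k))) ∧
      ∀ V ∈ 𝓝 x, ∀ᶠ k in atTop, U k ⊆ V

/-!
Pass to a subsequence with `f (u n)` outside a neighbourhood `W` of `f x` and, by inflatability,
to connected neighbourhoods `C k` of its points shrinking to `x`. As `f` maps the compact sets
`{x} ∪ {q j}` (for `q → x`) to compact sets, no sequence `q → x` with `q j ∈ C (κ j)` can take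
infinitely many distinct values outside a neighbourhood `O` of `f x`; hence eventually
`f '' C k ⊆ O ∪ T` with `T` finite. Points of `f '' C k` outside `closure O` are then isolated in
this connected non-singleton set, so `f '' C k ⊆ closure O`. Taking `O` whose closure misses
`T \ {f x}` yields `f '' C k ⊆ W` eventually, a contradiction.
-/

open Set

theorem IsPreconnected.subset_of_finite_diff {Y : Type*} [TopologicalSpace Y] [T1Space Y]
    {S F : Set Y} (hS : IsPreconnected S) (hF : IsClosed F) (hfin : (S \ F).Finite)
    (hnt : S.Nontrivial) : S ⊆ F := by
  intro t htS
  by_contra htF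
  obtain ⟨s, hsS, hst⟩ := hnt.exists_ne t
  -- `t` is isolated in `S`: the open set `(F ∪ ((S \ F) \ {t}))ᶜ` meets `S` only in `t`.
  have hopen : IsOpen (F ∪ ((S \ F) \ {t}))ᶜ := (hF.union (hfin.sdiff).isClosed).isOpen_compl
  obtain ⟨z, hzS, hzt, hzt'⟩ := hS _ _ hopen isOpen_compl_singleton
    (fun z _ => by by_cases hz : z = t <;> simp_all)
    ⟨t, htS, by simp [htF]⟩ ⟨s, hsS, hst⟩
  simp_all

theorem nontrivial_image_of_not_locallyConstantAt {X Y : Type*} [TopologicalSpace X] {f : X → Y}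
    {a : X} {C : Set X} (hf : ¬ LocallyConstantAt f a) (hC : C ∈ 𝓝 a) : (f '' C).Nontrivial := by
  by_contra h
  exact hf ⟨C, hC, fun z hz =>
    not_nontrivial_iff.1 h (mem_image_of_mem f hz) (mem_image_of_mem f (mem_of_mem_nhds hC))⟩

section

variable {X Y : Type*} [TopologicalSpace X] [TopologicalSpace Y] [T2Space Y] {f : X → Y} {x : X}
  (hcomp : ∀ K : Set X, IsCompact K → IsCompact (f '' K))
include hcomp

theorem tendsto_comp_of_isCompact_image {q : ℕ → X} (hq : Tendsto q atTop (𝓝 x))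
    (hfin : Tendsto (f ∘ q) atTop cofinite) : Tendsto (f ∘ q) atTop (𝓝 (f x)) := by
  have hK : ∀ N, IsCompact (f '' insert x (range fun j => q (j + N))) := fun N =>
    hcomp _ (hq.comp (tendsto_add_atTop_nat N)).isCompact_insert_range
  have hmem : ∀ N, ∀ᶠ j in atTop, (f ∘ q) j ∈ f '' insert x (range fun j => q (j + N)) :=
    fun N => (eventually_ge_atTop N).mono fun j hj =>
      mem_image_of_mem f (mem_insert_of_mem _ ⟨j - N, by simp [Nat.sub_add_cancel hj]⟩)
  refine (hK 0).tendsto_nhds_of_unique_mapClusterPt (hmem 0) fun y _ hy => ?_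
  -- A cluster point lies in the image of every tail, but any value `≠ f x` leaves some tail.
  obtain ⟨N, hN⟩ := eventually_atTop.1 (hfin.eventually (eventually_cofinite_ne y))
  obtain ⟨z, hz | ⟨j, rfl⟩, rfl⟩ := (hK N).isClosed.mem_of_mapClusterPt hy (hmem N)
  · rw [hz]
  · exact absurd rfl (hN (j + N) (Nat.le_add_left N j))

theorem exists_finite_eventually_image_subset_union {C : ℕ → Set X}
    (hC : Tendsto C atTop (𝓝 x).smallSets) {O : Set Y} (hO : O ∈ 𝓝 (f x)) :
    ∃ T : Set Y, T.Finite ∧ ∀ᶠ k in atTop, f '' C k ⊆ O ∪ T := by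
  -- Otherwise a greedy choice gives points `p j` of `C (κ j)`, `κ` strictly increasing, with
  -- distinct values outside `O`; they contradict `tendsto_comp_of_isCompact_image`.
  by_contra! h
  obtain ⟨p, hpC, hp⟩ := exists_seq_of_forall_finset_exists
    (fun p : ℕ × X => p.2 ∈ C p.1 ∧ f p.2 ∉ O) (fun p p' => p.1 < p'.1 ∧ f p.2 ≠ f p'.2)
    fun s _ => by
      obtain ⟨k, hkC, hks⟩ := ((h _ ((s.finite_toSet.image Prod.snd).image f)).and_eventually
        (eventually_gt_atTop (s.sup Prod.fst))).exists
      obtain ⟨_, ⟨a, ha, rfl⟩, hO⟩ := not_subset.1 hkC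
      refine ⟨(k, a), ⟨ha, fun h => hO (Or.inl h)⟩, fun p hp => ⟨?_, ?_⟩⟩
      · exact (Finset.le_sup (f := Prod.fst) hp).trans_lt hks
      · exact fun he => hO (Or.inr ⟨p.2, mem_image_of_mem _ hp, he⟩)
  have hq : Tendsto (fun j => (p j).2) atTop (𝓝 x) :=
    (hC.comp (strictMono_nat_of_lt_succ fun j => (hp j (j + 1) j.lt_succ_self).1).tendsto_atTop
      ).of_smallSets (Eventually.of_forall fun j => (hpC j).1)
  have hinj : Function.Injective fun j => f (p j).2 := fun m n he => by
    by_contra hmn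
    rcases lt_or_gt_of_ne hmn with hlt | hlt
    exacts [(hp m n hlt).2 he, (hp n m hlt).2 he.symm]
  obtain ⟨j, hj⟩ := ((tendsto_comp_of_isCompact_image hcomp hq
    (Nat.cofinite_eq_atTop ▸ hinj.tendsto_cofinite)).eventually_mem hO).exists
  exact (hpC j).2 hj

theorem eventually_image_subset_closure {C : ℕ → Set X}
    (hC : Tendsto C atTop (𝓝 x).smallSets) (hconn : ∀ k, IsPreconnected (f '' C k))
    (hnt : ∀ k, (f '' C k).Nontrivial) {O : Set Y} (hO : O ∈ 𝓝 (f x)) :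
    ∀ᶠ k in atTop, f '' C k ⊆ closure O := by
  obtain ⟨T, hT, hCT⟩ := exists_finite_eventually_image_subset_union hcomp hC hO
  refine hCT.mono fun k hk => (hconn k).subset_of_finite_diff isClosed_closure
    (hT.subset fun y ⟨hy, hyO⟩ => ?_) (hnt k)
  exact (hk hy).resolve_left fun h => hyO (subset_closure h)

theorem tendsto_image_smallSets {C : ℕ → Set X}
    (hC : Tendsto C atTop (𝓝 x).smallSets) (hconn : ∀ k, IsPreconnected (f '' C k))
    (hnt : ∀ k, (f '' C k).Nontrivial) :
    Tendsto (fun k => f '' C k) atTop (𝓝 (f x)).smallSets := by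
  refine tendsto_smallSets_iff.2 fun W hW => ?_
  obtain ⟨T, hT, hCT⟩ := exists_finite_eventually_image_subset_union hcomp hC hW
  -- `Y` need not be regular, but some neighbourhood `U` of `f x` has closure avoiding `T \ {f x}`.
  obtain ⟨U, V, hU, hV, hxU, hTV, hUV⟩ := SeparatedNhds.of_isCompact_isCompact isCompact_singleton
    (hT.sdiff (t := {f x})).isCompact (disjoint_singleton_left.2 fun h => h.2 rfl)
  filter_upwards [hCT, eventually_image_subset_closure hcomp hC hconn hnt (hU.mem_nhds
    (hxU rfl))] with k hkW hkU y hy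
  refine (hkW hy).elim id fun hyT => ?_
  by_contra hyW
  have hyx : y ≠ f x := fun h => hyW (h ▸ mem_of_mem_nhds hW)
  exact (hUV.closure_left hV).notMem_of_mem_left (hkU hy) (hTV ⟨hyT, hyx⟩)

end

theorem stmt16 {X Y : Type*} [TopologicalSpace X] [TopologicalSpace Y]
    [LocallyConnectedSpace X] [T2Space Y]
    (f : X → Y) (hf : Preserving f) (x : X) (hx : InflatablePoint x)
    (u : ℕ → X) (hu : Tendsto u atTop (𝓝 x))
    (hnc : ∀ n, ¬ LocallyConstantAt f (u n)) :
    Tendsto (fun n => f (u n)) atTop (𝓝 (f x)) := by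
  by_contra hcon
  obtain ⟨W, hW, hfreq⟩ := not_tendsto_iff_exists_frequently_notMem.1 hcon
  obtain ⟨ψ, hψ, hψW⟩ := extraction_of_frequently_atTop hfreq
  obtain ⟨φ, -, U, hU, hUx⟩ := hx (u ∘ ψ) (hu.comp hψ.tendsto_atTop)
    fun n h => hψW n ((show u (ψ n) = x from h) ▸ mem_of_mem_nhds hW)
  choose C hC hCconn hCU using fun k =>
    locallyConnectedSpace_iff_connected_subsets.1 ‹_› _ _ (hU k)
  have hCx : Tendsto C atTop (𝓝 x).smallSets := tendsto_smallSets_iff.2 fun V hV =>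
    (hUx V hV).mono fun k hk => (hCU k).trans hk
  obtain ⟨k, hk⟩ := (tendsto_smallSets_iff.1 (tendsto_image_smallSets hf.1 hCx
    (fun k => hf.2 _ (hCconn k))
    (fun k => nontrivial_image_of_not_locallyConstantAt (hnc _) (hC k))) W hW).exists
  exact hψW (φ k) (hk (mem_image_of_mem f (mem_of_mem_nhds (hC k))))
end

section
/- For a T₁ space X, the following are equivalent: (a) every connectedness preserving function from X into any T₁ space is continuous; (d) for every non-closed set A ⊆ X there exists a connected set H ⊆ X with H ∩ A ≠ ∅, H \ A ≠ ∅, and H \ A finite. -/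
/-! If `A` is not closed and (d) fails for `A`, collapse `A` to one point of a space with the
cofinite topology. The point is closed and its preimage is `A`, so this map is not continuous;
yet it preserves preconnectedness: an image with infinitely many points is preconnected in the
cofinite topology, and otherwise the preconnected set lies in `A` or is finite, hence a point by T₁.
Conversely, if `f ⁻¹' C` is not closed, take `H` from (d): `f '' H` is covered by the disjoint
closed sets `C` and `f '' (H \ f ⁻¹' C)` (finite, so closed in the T₁ target), and meets both. -/

namespace CofiniteTopology

variable {α : Type*}

theorem isPreconnected_of_infinite {s : Set (CofiniteTopology α)} (hs : s.Infinite) :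
    IsPreconnected s := by
  refine IsPreirreducible.isPreconnected fun u v hu hv _ _ => ?_
  rw [isOpen_iff'] at hu hv
  rcases hu with rfl | hu
  · simp_all
  rcases hv with rfl | hv
  · simp_all
  have : (s \ (uᶜ ∪ vᶜ)).Nonempty := (hs.sdiff (hu.union hv)).nonempty
  simpa only [Set.compl_union, compl_compl, Set.sdiff_eq] using this

end CofiniteTopology

theorem Set.Finite.subsingleton_of_isPreconnected {X : Type*} [TopologicalSpace X] [T1Space X]
    {s : Set X} (hfin : s.Finite) (hs : IsPreconnected s) : s.Subsingleton :=
  hs.isDiscrete_iff_subsingleton.mp hfin.isDiscrete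

section

variable {X : Type*}

noncomputable def collapse (A : Set X) (x : X) : CofiniteTopology (Option X) :=
  open Classical in CofiniteTopology.of (if x ∈ A then none else some x)

theorem collapse_preimage_none (A : Set X) :
    collapse A ⁻¹' {CofiniteTopology.of none} = A := by
  ext x
  by_cases hx : x ∈ A <;> simp [collapse, hx]

theorem isPreconnected_image_collapse [TopologicalSpace X] [T1Space X] {A C : Set X}
    (hC : IsPreconnected C)
    (hA : (C ∩ A).Nonempty → (C \ A).Nonempty → (C \ A).Infinite) :
    IsPreconnected (collapse A '' C) := by
  by_cases hfin : (C \ A).Finite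
  · have hsub : (collapse A '' C).Subsingleton := by
      rcases (C \ A).eq_empty_or_nonempty with hCA | hCA
      · refine Set.subsingleton_of_subset_singleton (a := CofiniteTopology.of none) ?_
        rintro _ ⟨x, hx, rfl⟩
        have : x ∈ A := by_contra fun h => hCA.subset ⟨hx, h⟩
        simp [collapse, this]
      · have hdisj : C ∩ A = ∅ := by
          by_contra h
          exact hA (Set.nonempty_iff_ne_empty.mpr h) hCA hfin
        have : C.Finite := by rwa [← Set.sdiff_self_inter, hdisj, Set.sdiff_empty] at hfin
        exact (this.subsingleton_of_isPreconnected hC).image _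
    exact hsub.isPreconnected
  · have hinj : Set.InjOn (collapse A) (C \ A) := by
      intro x hx y hy hxy
      simpa [collapse, hx.2, hy.2] using hxy
    exact CofiniteTopology.isPreconnected_of_infinite
      (((Set.infinite_image_iff hinj).mpr hfin).mono (Set.image_mono Set.sdiff_subset))

end

theorem IsPreconnected.subset_or_disjoint_preimage_of_finite_diff {X Y : Type*}
    [TopologicalSpace Y] [T1Space Y] {f : X → Y} {H : Set X} {C : Set Y}
    (hH : IsPreconnected (f '' H)) (hC : IsClosed C) (hfin : (H \ f ⁻¹' C).Finite) :
    H ⊆ f ⁻¹' C ∨ Disjoint H (f ⁻¹' C) := by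
  set F := f '' (H \ f ⁻¹' C)
  have hFC : Disjoint F C := by
    rw [Set.disjoint_left]
    rintro _ ⟨x, hx, rfl⟩
    exact hx.2
  have hcover : f '' H ⊆ C ∪ F := by
    rintro _ ⟨x, hx, rfl⟩
    by_cases h : f x ∈ C
    · exact Or.inl h
    · exact Or.inr ⟨x, ⟨hx, h⟩, rfl⟩
  rcases isPreconnected_iff_subset_of_disjoint_closed.mp hH C F hC (hfin.image f).isClosed
    hcover (by rw [hFC.symm.inter_eq, Set.inter_empty]) with h | h
  · exact Or.inl (Set.image_subset_iff.mp h)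
  · refine Or.inr (Set.disjoint_left.mpr fun x hx hxC => ?_)
    exact Set.disjoint_left.mp hFC (h ⟨x, hx, rfl⟩) hxC

theorem stmt17 {X : Type u} [TopologicalSpace X] [T1Space X] :
    (∀ (Y : Type u) (_ : TopologicalSpace Y) (_ : T1Space Y) (f : X → Y),
        (∀ C : Set X, IsPreconnected C → IsPreconnected (f '' C)) → Continuous f) ↔
    (∀ A : Set X, ¬ IsClosed A →
        ∃ H : Set X, IsPreconnected H ∧ (H ∩ A).Nonempty ∧ (H \ A).Nonempty ∧
          (H \ A).Finite) := by
  constructor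
  · intro h A hA
    by_contra! hno
    have hcont := h _ _ inferInstance (collapse A) fun C hC =>
      isPreconnected_image_collapse hC (hno C hC)
    exact hA (collapse_preimage_none A ▸ isClosed_singleton.preimage hcont)
  · intro h Y _ _ f hf
    refine continuous_iff_isClosed.mpr fun C hC => by_contra fun hnot => ?_
    obtain ⟨H, hH, ⟨x, hxH, hxC⟩, ⟨z, hzH, hzC⟩, hfin⟩ := h _ hnot
    rcases (hf H hH).subset_or_disjoint_preimage_of_finite_diff hC hfin with hsub | hdisj
    · exact hzC (hsub hzH)
    · exact Set.disjoint_left.mp hdisj hxH hxC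
end

section
/- Let X be a T₁ space such that every preserving function from X into any T₁ space is continuous. Then every closed subspace F of X is the topological sum of its connected components; equivalently, every connected component of every closed subspace is relatively open in that subspace. -/
open Filter Topology

/-!
It suffices that no point `z` of a closed set `F` lies in the closure of `F \ C`, where `C` is the
component of `z` in `F`. Collapse `C` to `z` and the rest of `F` to a point `d ∈ F \ C`, keeping
every point outside `F`, and give the target the coarsest topology in which the cofinite sets and
`U = Fᶜ ∪ {z}` are open. It is `T₁`. Every image of the collapse lies in `U ∪ {d}`, hence is
compact. A preconnected set either lies in `F` (then in `C` or in `F \ C`, so its image is a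
point), or is a point, or, since `X` is `T₁`, meets `Fᶜ` in an infinite set; and every set meeting
`U` in an infinite set is preconnected. So the collapse is preserving, hence continuous, and the
preimage `Fᶜ ∪ C` of `U` is a neighbourhood of `z` missing `F \ C`.
-/

open Set

abbrev cofiniteWithOpen {α : Type*} (U : Set α) : TopologicalSpace α where
  IsOpen O := O.Nonempty → (U \ O).Finite ∧ (O ⊆ U ∨ Oᶜ.Finite)
  isOpen_univ _ := ⟨by simp, Or.inr (by simp)⟩
  isOpen_inter O₁ O₂ h₁ h₂ hne := by
    obtain ⟨hU₁, hO₁⟩ := h₁ (hne.mono inter_subset_left)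
    obtain ⟨hU₂, hO₂⟩ := h₂ (hne.mono inter_subset_right)
    refine ⟨by rw [sdiff_inter]; exact hU₁.union hU₂, ?_⟩
    rcases hO₁ with hO₁ | hO₁
    · exact Or.inl (inter_subset_left.trans hO₁)
    rcases hO₂ with hO₂ | hO₂
    · exact Or.inl (inter_subset_right.trans hO₂)
    · exact Or.inr (by rw [compl_inter]; exact hO₁.union hO₂)
  isOpen_sUnion s hs hne := by
    obtain ⟨x, O, hOs, hxO⟩ := hne
    refine ⟨(hs O hOs ⟨x, hxO⟩).1.subset (sdiff_subset_sdiff_right (subset_sUnion_of_mem hOs)), ?_⟩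
    by_cases hcof : ∃ O ∈ s, Oᶜ.Finite
    · obtain ⟨O', hO's, hO'⟩ := hcof
      exact Or.inr (hO'.subset (compl_subset_compl.2 (subset_sUnion_of_mem hO's)))
    · push Not at hcof
      refine Or.inl (sUnion_subset fun O' hO's y hy => ?_)
      exact ((hs O' hO's ⟨y, hy⟩).2.resolve_right (hcof O' hO's)) hy

namespace cofiniteWithOpen

variable {α : Type*} (U : Set α)

theorem t1Space : @T1Space α (cofiniteWithOpen U) := by
  let := cofiniteWithOpen U
  exact ⟨fun y => ⟨fun _ =>
    ⟨(finite_singleton y).subset fun _ hx => by simpa using hx.2, Or.inr (by simp)⟩⟩⟩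

theorem isOpen_self : @IsOpen α (cofiniteWithOpen U) U :=
  fun _ => ⟨by simp, Or.inl subset_rfl⟩

variable {U}

theorem finite_diff_of_isOpen {O : Set α} (hO : @IsOpen α (cofiniteWithOpen U) O)
    (hne : O.Nonempty) : (U \ O).Finite :=
  (hO hne).1

theorem isCompact_of_finite_diff {M : Set α} (hM : (M \ U).Finite) :
    @IsCompact α (cofiniteWithOpen U) M := by
  classical
  let := cofiniteWithOpen U
  refine isCompact_of_finite_subcover fun Us hUs hcov => ?_
  rcases M.eq_empty_or_nonempty with rfl | ⟨m, hm⟩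
  · exact ⟨∅, by simp⟩
  obtain ⟨i, hi⟩ := mem_iUnion.1 (hcov hm)
  have hrest : (M \ Us i).Finite := by
    refine (hM.union (finite_diff_of_isOpen (hUs i) ⟨m, hi⟩)).subset fun x hx => ?_
    by_cases hxU : x ∈ U
    exacts [Or.inr ⟨hxU, hx.2⟩, Or.inl ⟨hx.1, hxU⟩]
  obtain ⟨t, ht⟩ := hrest.isCompact.elim_finite_subcover Us hUs (sdiff_subset.trans hcov)
  refine ⟨insert i t, fun x hx => ?_⟩
  by_cases hxi : x ∈ Us i
  · exact mem_biUnion (Finset.mem_insert_self i t) hxi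
  · obtain ⟨j, hj, hxj⟩ := mem_iUnion₂.1 (ht ⟨hx, hxi⟩)
    exact mem_biUnion (Finset.mem_insert_of_mem hj) hxj

theorem isPreconnected_of_infinite_inter {E : Set α} (hE : (E ∩ U).Infinite) :
    @IsPreconnected α (cofiniteWithOpen U) E := by
  intro O₁ O₂ h₁ h₂ _ ⟨x₁, hx₁⟩ ⟨x₂, hx₂⟩
  have hfin := (finite_diff_of_isOpen h₁ ⟨x₁, hx₁.2⟩).union
    (finite_diff_of_isOpen h₂ ⟨x₂, hx₂.2⟩)
  obtain ⟨x, ⟨hxE, hxU⟩, hx⟩ := (hE.sdiff hfin).nonempty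
  exact ⟨x, hxE, not_not.1 fun h => hx (Or.inl ⟨hxU, h⟩),
    not_not.1 fun h => hx (Or.inr ⟨hxU, h⟩)⟩

end cofiniteWithOpen

section

variable {X : Type*} [TopologicalSpace X]

theorem IsPreconnected.subset_or_disjoint_of_finite_inter [T1Space X] {S V : Set X}
    (hS : IsPreconnected S) (hV : IsOpen V) (hfin : (S ∩ V).Finite) : S ⊆ V ∨ Disjoint S V := by
  refine (isPreconnected_iff_subset_of_disjoint.1 hS V (S ∩ V)ᶜ hV hfin.isClosed.isOpen_compl
    (fun x hx => ?_) (by ext; simp +contextual)).imp_right fun h => ?_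
  · by_cases hxV : x ∈ V
    exacts [Or.inl hxV, Or.inr fun h => hxV h.2]
  · exact disjoint_left.2 fun x hxS hxV => h hxS ⟨hxS, hxV⟩

theorem IsPreconnected.infinite_inter_compl_or_subsingleton [T1Space X] {S F : Set X}
    (hS : IsPreconnected S) (hF : IsClosed F) (hSF : ¬S ⊆ F) :
    (S ∩ Fᶜ).Infinite ∨ S.Subsingleton := by
  refine or_iff_not_imp_left.2 fun hfin => ?_
  rcases hS.subset_or_disjoint_of_finite_inter hF.isOpen_compl (not_infinite.1 hfin) with h | h
  · refine not_not.1 fun hnt => hfin ?_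
    rw [inter_eq_self_of_subset_left h]
    exact hS.infinite_of_nontrivial (not_subsingleton_iff.1 hnt)
  · exact absurd (fun x hx => not_not.1 (disjoint_left.1 h hx)) hSF

theorem subset_connectedComponentIn_or_disjoint {S F : Set X} {z : X}
    (hS : IsPreconnected S) (hSF : S ⊆ F) :
    S ⊆ connectedComponentIn F z ∨ Disjoint S (connectedComponentIn F z) := by
  refine or_iff_not_imp_right.2 fun h => ?_
  obtain ⟨q, hqS, hqC⟩ := not_disjoint_iff.1 h
  rw [connectedComponentIn_eq hqC]
  exact hS.subset_connectedComponentIn hqS hSF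

theorem isOpen_connectedComponent_of_forall_notMem_closure {F : Set X}
    (h : ∀ z ∈ F, z ∉ closure (F \ connectedComponentIn F z)) (x : F) :
    IsOpen (connectedComponent x) := by
  have hC : connectedComponent x = Subtype.val ⁻¹' connectedComponentIn F x := by
    rw [connectedComponentIn_eq_image x.2, Subtype.val_injective.preimage_image]
  suffices connectedComponent x = (↑) ⁻¹' (closure (F \ connectedComponentIn F x))ᶜ from
    this ▸ isClosed_closure.isOpen_compl.preimage continuous_subtype_val
  rw [hC]
  ext w
  refine ⟨fun hw hcl => h w w.2 ?_, fun hw => not_not.1 fun hwC => hw (subset_closure ⟨w.2, hwC⟩)⟩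
  rwa [← connectedComponentIn_eq hw]

open scoped Classical in
noncomputable def collapseComponent (F : Set X) (z d : X) (w : X) : X :=
  if w ∈ connectedComponentIn F z then z else if w ∈ F then d else w

variable {F : Set X} {z d : X}

theorem collapseComponent_of_mem_connectedComponentIn {w : X} (hw : w ∈ connectedComponentIn F z) :
    collapseComponent F z d w = z :=
  if_pos hw

theorem collapseComponent_of_mem_diff {w : X} (hw : w ∈ F \ connectedComponentIn F z) :
    collapseComponent F z d w = d := by
  rw [collapseComponent, if_neg hw.2, if_pos hw.1]

theorem collapseComponent_of_notMem {w : X} (hw : w ∉ F) : collapseComponent F z d w = w := by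
  rw [collapseComponent, if_neg fun h => hw (connectedComponentIn_subset F z h), if_neg hw]

theorem isCompact_image_collapseComponent (K : Set X) :
    @IsCompact X (cofiniteWithOpen (Fᶜ ∪ {z})) (collapseComponent F z d '' K) := by
  refine cofiniteWithOpen.isCompact_of_finite_diff ((finite_singleton d).subset ?_)
  rintro _ ⟨⟨w, -, rfl⟩, hwU⟩
  by_cases hwC : w ∈ connectedComponentIn F z
  · exact absurd (Or.inr (collapseComponent_of_mem_connectedComponentIn hwC)) hwU
  by_cases hwF : w ∈ F
  · exact collapseComponent_of_mem_diff ⟨hwF, hwC⟩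
  · exact absurd (Or.inl (by rwa [collapseComponent_of_notMem hwF])) hwU

theorem isPreconnected_image_collapseComponent [T1Space X] (hF : IsClosed F) {S : Set X}
    (hS : IsPreconnected S) :
    @IsPreconnected X (cofiniteWithOpen (Fᶜ ∪ {z})) (collapseComponent F z d '' S) := by
  by_cases hSF : S ⊆ F
  · rcases subset_connectedComponentIn_or_disjoint (z := z) hS hSF with h | h
    · refine @Subsingleton.isPreconnected X (cofiniteWithOpen _) _ <|
        (subsingleton_singleton (a := z)).anti ?_
      rintro _ ⟨w, hw, rfl⟩
      exact collapseComponent_of_mem_connectedComponentIn (h hw)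
    · refine @Subsingleton.isPreconnected X (cofiniteWithOpen _) _ <|
        (subsingleton_singleton (a := d)).anti ?_
      rintro _ ⟨w, hw, rfl⟩
      exact collapseComponent_of_mem_diff ⟨hSF hw, disjoint_left.1 h hw⟩
  rcases hS.infinite_inter_compl_or_subsingleton hF hSF with hinf | hsub
  · refine cofiniteWithOpen.isPreconnected_of_infinite_inter (hinf.mono fun w hw => ?_)
    exact ⟨⟨w, hw.1, collapseComponent_of_notMem hw.2⟩, Or.inl hw.2⟩
  · exact @Subsingleton.isPreconnected X (cofiniteWithOpen _) _ (hsub.image _)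

theorem notMem_closure_diff_connectedComponentIn (hz : z ∈ F)
    (hcont : ∀ d, @Continuous X X _ (cofiniteWithOpen (Fᶜ ∪ {z})) (collapseComponent F z d)) :
    z ∉ closure (F \ connectedComponentIn F z) := by
  intro hcl
  obtain ⟨d, hd⟩ := closure_nonempty_iff.1 ⟨z, hcl⟩
  have hzC : z ∈ connectedComponentIn F z := mem_connectedComponentIn hz
  have hdz : d ≠ z := fun h => hd.2 (h ▸ hzC)
  have hopen := @Continuous.isOpen_preimage X X _ (cofiniteWithOpen (Fᶜ ∪ {z})) _ (hcont d) _
    (cofiniteWithOpen.isOpen_self _)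
  obtain ⟨w, hwU, hw⟩ := mem_closure_iff.1 hcl _ hopen
    (by simp [mem_preimage, collapseComponent_of_mem_connectedComponentIn hzC])
  rw [mem_preimage, collapseComponent_of_mem_diff hw] at hwU
  exact hwU.elim (· hd.1) hdz

end

theorem stmt18 {X : Type u} [TopologicalSpace X] [T1Space X]
    (hPr : ∀ (Y : Type u) (_ : TopologicalSpace Y) (_ : T1Space Y) (f : X → Y),
        Preserving f → Continuous f) :
    ∀ F : Set X, IsClosed F → ∀ x : F, IsOpen (connectedComponent x) := by
  intro F hF
  refine isOpen_connectedComponent_of_forall_notMem_closure fun z hz => ?_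
  refine notMem_closure_diff_connectedComponentIn hz fun d => ?_
  exact hPr X _ (cofiniteWithOpen.t1Space _) _
    ⟨fun K _ => isCompact_image_collapseComponent K,
      fun _ hS => isPreconnected_image_collapseComponent hF hS⟩
end
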